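/- arXiv:1808.02936 — 4 statements merged into one kernel-verified Lean document; each statement's English description precedes it below -/
import Mathlib

section
/- Let K be a field with a valuation v, let f(x) ∈ K[x] be a polynomial with leading coefficient c_f and multiset of roots R in an algebraic closure (so f factors as c_f · ∏_{r∈R}(x - r)). Then f(x) has all coefficients of valuation ≥ 0 if and only if ∑_{r∈R} min{0, v(r)} ≥ -v(c_f). -/
set_option linter.unusedSectionVars false

open Polynomial

section Aux

variable {F : Type*} [Field F] [DecidableEq F] (v : F → ℚ)
  (hmul : ∀ x y : F, x ≠ 0 → y ≠ 0 → v (x * y) = v x + v y)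
  (hadd : ∀ x y : F, x ≠ 0 → y ≠ 0 → x + y ≠ 0 → min (v x) (v y) ≤ v (x + y))

include hmul

lemma aux_v_one : v 1 = 0 := by
  have := hmul 1 1 one_ne_zero one_ne_zero
  simp only [one_mul] at this
  linarith

lemma aux_v_neg (x : F) (hx : x ≠ 0) : v (-x) = v x := by
  have h1 : v (-1 : F) = 0 := by
    have h := hmul (-1) (-1) (by norm_num) (by norm_num)
    simp only [neg_mul, one_mul, neg_neg] at h
    have h2 := aux_v_one v hmul
    linarith
  have h := hmul (-1) x (by norm_num) hx
  rw [neg_one_mul] at h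
  rw [h, h1]; ring

include hadd

lemma aux_add_lt (x y : F) (hx : x ≠ 0) (hy : y ≠ 0) (hlt : v x < v y) :
    x + y ≠ 0 ∧ v (x + y) = v x := by
  have hxy : x + y ≠ 0 := by
    intro h
    have hx' : x = -y := eq_neg_of_add_eq_zero_left h
    rw [hx', aux_v_neg v hmul y hy] at hlt
    exact lt_irrefl _ hlt
  refine ⟨hxy, le_antisymm ?_ ?_⟩
  · have h := hadd (x + y) (-y) hxy (neg_ne_zero.2 hy)
      (by rw [add_neg_cancel_right]; exact hx)
    rw [add_neg_cancel_right, aux_v_neg v hmul y hy] at h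
    rcases le_total (v (x + y)) (v y) with h' | h'
    · calc v (x + y) = min (v (x + y)) (v y) := (min_eq_left h').symm
        _ ≤ v x := h
    · rw [min_eq_right h'] at h
      linarith
  · have h := hadd x y hx hy hxy
    rwa [min_eq_left hlt.le] at h


omit hmul hadd in
lemma aux_coeff_zero (r : F) (g : F[X]) :
    ((X - C r) * g).coeff 0 = -(r * g.coeff 0) := by
  rw [sub_mul, coeff_sub, mul_coeff_zero, coeff_X_zero, zero_mul, zero_sub,
    mul_coeff_zero, coeff_C_zero]

omit hmul hadd in
lemma aux_coeff_succ (r : F) (g : F[X]) (n : ℕ) :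
    ((X - C r) * g).coeff (n + 1) = g.coeff n - r * g.coeff (n + 1) := by
  rw [sub_mul, coeff_sub, coeff_X_mul, coeff_C_mul]

include hmul hadd in
lemma aux_step (r : F) (g : F[X]) (b : ℚ)
    (hLB : ∀ i, g.coeff i = 0 ∨ b ≤ v (g.coeff i))
    (hAtt : ∃ i, g.coeff i ≠ 0 ∧ v (g.coeff i) = b) :
    (∀ i, ((X - C r) * g).coeff i = 0 ∨
        b + (if r = 0 then 0 else min 0 (v r)) ≤ v (((X - C r) * g).coeff i)) ∧
    (∃ i, ((X - C r) * g).coeff i ≠ 0 ∧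
        v (((X - C r) * g).coeff i) = b + (if r = 0 then 0 else min 0 (v r))) := by
  by_cases hr : r = 0
  · subst hr
    simp only [if_pos rfl, add_zero]
    constructor
    · intro i
      match i with
      | 0 => left; rw [aux_coeff_zero]; ring
      | n + 1 =>
        rw [aux_coeff_succ]
        simpa using hLB n
    · obtain ⟨i, hne, hvb⟩ := hAtt
      refine ⟨i + 1, ?_⟩
      rw [aux_coeff_succ]
      simpa using ⟨hne, hvb⟩
  · simp only [if_neg hr]
    set m := min 0 (v r) with hm
    have hm0 : m ≤ 0 := min_le_left _ _
    have hmr : m ≤ v r := min_le_right _ _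
    have hvrc : ∀ x : F, x ≠ 0 → v (-(r * x)) = v r + v x := fun x hx => by
      rw [aux_v_neg v hmul (r * x) (mul_ne_zero hr hx), hmul r x hr hx]
    constructor
    · intro i
      by_cases h0 : ((X - C r) * g).coeff i = 0
      · exact Or.inl h0
      right
      match i with
      | 0 =>
        rw [aux_coeff_zero] at h0 ⊢
        have hc : g.coeff 0 ≠ 0 := by intro h; rw [h] at h0; simp at h0
        rw [hvrc _ hc]
        rcases hLB 0 with h | h
        · exact absurd h hc
        · linarith
      | n + 1 =>
        rw [aux_coeff_succ] at h0 ⊢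
        by_cases ha : g.coeff n = 0
        · rw [ha, zero_sub] at h0 ⊢
          have hc : g.coeff (n + 1) ≠ 0 := by intro h; rw [h] at h0; simp at h0
          rw [hvrc _ hc]
          rcases hLB (n + 1) with h | h
          · exact absurd h hc
          · linarith
        by_cases hc : g.coeff (n + 1) = 0
        · rw [hc, mul_zero, sub_zero] at h0 ⊢
          rcases hLB n with h | h
          · exact absurd h ha
          · linarith
        have key := hadd (g.coeff n) (-(r * g.coeff (n + 1))) ha
          (neg_ne_zero.2 (mul_ne_zero hr hc)) (by rwa [← sub_eq_add_neg])
        rw [← sub_eq_add_neg, hvrc _ hc] at key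
        have h1 : b ≤ v (g.coeff n) := (hLB n).resolve_left ha
        have h2 : b ≤ v (g.coeff (n + 1)) := (hLB (n + 1)).resolve_left hc
        calc b + m ≤ min (v (g.coeff n)) (v r + v (g.coeff (n + 1))) := by
              apply le_min <;> linarith
          _ ≤ _ := key
    · rcases le_or_gt 0 (v r) with hvr | hvr
      · -- m = 0; pick maximal attaining index
        have hm' : m = 0 := min_eq_left hvr
        have hsne : (g.support.filter (fun i => v (g.coeff i) = b)).Nonempty := by
          obtain ⟨i, hne, hvb⟩ := hAtt
          exact ⟨i, Finset.mem_filter.2 ⟨mem_support_iff.2 hne, hvb⟩⟩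
        set i0 := (g.support.filter (fun i => v (g.coeff i) = b)).max' hsne with hi0
        have hmem := (g.support.filter (fun i => v (g.coeff i) = b)).max'_mem hsne
        rw [Finset.mem_filter, mem_support_iff] at hmem
        obtain ⟨hne0, hvb0⟩ := hmem
        refine ⟨i0 + 1, ?_⟩
        rw [aux_coeff_succ, hm', add_zero]
        by_cases hc : g.coeff (i0 + 1) = 0
        · rw [hc, mul_zero, sub_zero]
          exact ⟨hne0, hvb0⟩
        · have h2 : b ≤ v (g.coeff (i0 + 1)) := (hLB (i0 + 1)).resolve_left hc
          have hstrict : b < v r + v (g.coeff (i0 + 1)) := by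
            rcases lt_or_eq_of_le hvr with h | h
            · linarith
            · rcases lt_or_eq_of_le h2 with h' | h'
              · linarith
              · exfalso
                have : i0 + 1 ∈ g.support.filter (fun i => v (g.coeff i) = b) :=
                  Finset.mem_filter.2 ⟨mem_support_iff.2 hc, h'.symm⟩
                have := Finset.le_max' _ _ this
                omega
          have key := aux_add_lt v hmul hadd (g.coeff i0) (-(r * g.coeff (i0 + 1))) hne0
            (neg_ne_zero.2 (mul_ne_zero hr hc))
            (by rw [hvb0, hvrc _ hc]; exact hstrict)
          rw [← sub_eq_add_neg] at key
          exact ⟨key.1, by rw [key.2, hvb0]⟩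
      · -- m = v r
        have hm' : m = v r := min_eq_right hvr.le
        obtain ⟨i0, hne, hvb⟩ := hAtt
        refine ⟨i0, ?_⟩
        match i0, hne, hvb with
        | 0, hne, hvb =>
          rw [aux_coeff_zero, hvrc _ hne, hvb, hm']
          exact ⟨neg_ne_zero.2 (mul_ne_zero hr hne), by ring⟩
        | n + 1, hne, hvb =>
          rw [aux_coeff_succ, hm']
          by_cases ha : g.coeff n = 0
          · rw [ha, zero_sub, hvrc _ hne, hvb]
            exact ⟨neg_ne_zero.2 (mul_ne_zero hr hne), by ring⟩
          · have h1 : b ≤ v (g.coeff n) := (hLB n).resolve_left ha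
            have key := aux_add_lt v hmul hadd (-(r * g.coeff (n + 1))) (g.coeff n)
              (neg_ne_zero.2 (mul_ne_zero hr hne)) ha
              (by rw [hvrc _ hne, hvb]; linarith)
            rw [neg_add_eq_sub] at key
            exact ⟨key.1, by rw [key.2, hvrc _ hne, hvb]; ring⟩

include hmul hadd in
lemma aux_main (c : F) (hc : c ≠ 0) (R : Multiset F) :
    (∀ i, (C c * (R.map (fun r => X - C r)).prod).coeff i = 0 ∨
        v c + (R.map (fun r => if r = 0 then 0 else min 0 (v r))).sum ≤
          v ((C c * (R.map (fun r => X - C r)).prod).coeff i)) ∧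
    (∃ i, (C c * (R.map (fun r => X - C r)).prod).coeff i ≠ 0 ∧
        v ((C c * (R.map (fun r => X - C r)).prod).coeff i) =
          v c + (R.map (fun r => if r = 0 then 0 else min 0 (v r))).sum) := by
  induction R using Multiset.induction with
  | empty =>
    simp only [Multiset.map_zero, Multiset.prod_zero, mul_one, Multiset.sum_zero, add_zero,
      coeff_C]
    constructor
    · intro i
      by_cases h : i = 0
      · right; simp [h]
      · left; simp [h]
    · exact ⟨0, by simpa using hc⟩
  | cons r R ih =>
    have hprod : C c * ((r ::ₘ R).map (fun r => X - C r)).prod =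
        (X - C r) * (C c * (R.map (fun r => X - C r)).prod) := by
      rw [Multiset.map_cons, Multiset.prod_cons]; ring
    have hsum : ((r ::ₘ R).map (fun r => if r = 0 then 0 else min 0 (v r))).sum =
        (if r = 0 then 0 else min 0 (v r)) +
          (R.map (fun r => if r = 0 then 0 else min 0 (v r))).sum := by
      rw [Multiset.map_cons, Multiset.sum_cons]
    have key := aux_step v hmul hadd r _ _ ih.1 ih.2
    rw [hprod, hsum]
    constructor
    · intro i
      rcases key.1 i with h | h
      · exact Or.inl h
      · right; linarith
    · obtain ⟨i, h1, h2⟩ := key.2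
      exact ⟨i, h1, by rw [h2]; ring⟩

end Aux

/-- A polynomial `f = c · ∏_{r ∈ R} (X - r)` over a valued field has all coefficients of
valuation `≥ 0` iff `∑_{r ∈ R} min{0, v r} ≥ -v c`. -/
theorem stmt_0 {F : Type*} [Field F] [DecidableEq F] (v : F → ℚ)
    (hmul : ∀ x y : F, x ≠ 0 → y ≠ 0 → v (x * y) = v x + v y)
    (hadd : ∀ x y : F, x ≠ 0 → y ≠ 0 → x + y ≠ 0 → min (v x) (v y) ≤ v (x + y))
    (c : F) (hc : c ≠ 0) (R : Multiset F) (f : F[X])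
    (hf : f = Polynomial.C c * (R.map (fun r => Polynomial.X - Polynomial.C r)).prod) :
    (∀ i : ℕ, f.coeff i = 0 ∨ 0 ≤ v (f.coeff i)) ↔
      -(v c) ≤ (R.map (fun r => if r = 0 then 0 else min 0 (v r))).sum := by
  subst hf
  obtain ⟨hLB, hAtt⟩ := aux_main v hmul hadd c hc R
  constructor
  · intro h
    obtain ⟨i, hne, hv⟩ := hAtt
    rcases h i with h0 | h0
    · exact absurd h0 hne
    · linarith
  · intro hS i
    rcases hLB i with h | h
    · exact Or.inl h
    · right; linarith
end

section
/- Let R be a finite set of size ≥ 2 in a valued field, and for each pair of distinct r, r' ∈ R let d_{r∧r'} denote the depth of the smallest cluster containing both (i.e. d_{r∧r'} = v(r − r')... in general, the depth of r∧r'). Then 2·∑_{r≠r'∈R} d_{r∧r'} = ∑_{proper clusters s} d_s·(|s|² − ∑_{s'<s}|s'|²), where the sum is over all clusters s of size > 1 and s' ranges over the children (maximal proper subclusters) of s. -/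
/-!
Count ordered pairs of distinct roots according to the cluster `r ∧ r'`. A pair lies in
`s × s` exactly when `r ∧ r' ⊆ s`, and in that case `r ∧ r' ⊊ s` exactly when both roots
lie in a common child of `s`. Every root of a proper cluster lies in some child (at worst
its own singleton), so the diagonal is among the excluded pairs, and the children are
disjoint; hence exactly `|s|² - ∑_{s' < s} |s'|²` ordered pairs have `r ∧ r' = s`.
-/

open scoped Classical

/-- A cluster picture on a finite set `R`: a nested-or-disjoint family of nonempty subsets
("clusters") containing all singletons and `R`, with depths `d_s ∈ ℚ` strictly increasing
under reverse inclusion (depths are only meaningful on clusters of size ≥ 2). -/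
structure ClusterPicture (α : Type*) [DecidableEq α] where
  R : Finset α
  clusters : Finset (Finset α)
  nonempty_mem : ∀ s ∈ clusters, s.Nonempty
  subset_R : ∀ s ∈ clusters, s ⊆ R
  singleton_mem : ∀ r ∈ R, ({r} : Finset α) ∈ clusters
  top_mem : R ∈ clusters
  nested : ∀ s ∈ clusters, ∀ t ∈ clusters, s ⊆ t ∨ t ⊆ s ∨ Disjoint s t
  depth : Finset α → ℚ
  depth_lt : ∀ s ∈ clusters, ∀ t ∈ clusters, t ⊂ s → 2 ≤ t.card → depth s < depth t

/-- The children of a cluster `s`: the maximal clusters properly contained in `s`. -/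
def ClusterPicture.children {α : Type*} [DecidableEq α] (P : ClusterPicture α)
    (s : Finset α) : Finset (Finset α) :=
  P.clusters.filter (fun s' => s' ⊂ s ∧ ∀ t ∈ P.clusters, s' ⊂ t → ¬ t ⊂ s)

open Finset

theorem Finset.sum_sum_erase_eq_sum_offDiag {α M : Type*} [DecidableEq α] [AddCommMonoid M]
    (s : Finset α) (f : α → α → M) :
    ∑ r ∈ s, ∑ r' ∈ s.erase r, f r r' = ∑ p ∈ s.offDiag, f p.1 p.2 :=
  (sum_finset_product' _ _ _ fun p => by rw [mem_offDiag, mem_erase]; tauto).symm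

theorem Finset.card_product_self_sdiff_biUnion {α R : Type*} [DecidableEq α] [CommRing R]
    {s : Finset α} {cs : Finset (Finset α)} (hsub : ∀ c ∈ cs, c ⊆ s)
    (hdisj : (cs : Set (Finset α)).PairwiseDisjoint id) :
    (#(s ×ˢ s \ cs.biUnion fun c => c ×ˢ c) : R) = #s ^ 2 - ∑ c ∈ cs, (#c : R) ^ 2 := by
  have hB : cs.biUnion (fun c => c ×ˢ c) ⊆ s ×ˢ s :=
    biUnion_subset.2 fun c hc => product_subset_product (hsub c hc) (hsub c hc)
  have hcard : #(cs.biUnion fun c => c ×ˢ c) = ∑ c ∈ cs, #c ^ 2 := by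
    have : (cs : Set (Finset α)).PairwiseDisjoint fun c => c ×ˢ c :=
      fun c hc c' hc' hne => disjoint_product.2 (.inl (hdisj hc hc' hne))
    simp only [card_biUnion this, card_product, sq]
  rw [card_sdiff_of_subset hB, Nat.cast_sub (card_le_card hB), hcard, card_product]
  push_cast
  ring

namespace ClusterPicture

variable {α : Type*} [DecidableEq α] (P : ClusterPicture α)

/-- `w r r'` is the paper's `r ∧ r'`. -/
def IsWedge (w : α → α → Finset α) : Prop :=
  ∀ r ∈ P.R, ∀ r' ∈ P.R, w r r' ∈ P.clusters ∧ r ∈ w r r' ∧ r' ∈ w r r' ∧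
    ∀ t ∈ P.clusters, r ∈ t → r' ∈ t → w r r' ⊆ t

variable {P}

theorem mem_clusters_of_mem_children {s c : Finset α} (h : c ∈ P.children s) :
    c ∈ P.clusters :=
  (mem_filter.1 h).1

theorem ssubset_of_mem_children {s c : Finset α} (h : c ∈ P.children s) : c ⊂ s :=
  (mem_filter.1 h).2.1

theorem children_pairwiseDisjoint (s : Finset α) :
    (P.children s : Set (Finset α)).PairwiseDisjoint id := by
  intro c₁ h₁ c₂ h₂ hne
  have h₁' := mem_filter.1 h₁
  have h₂' := mem_filter.1 h₂
  rcases P.nested c₁ h₁'.1 c₂ h₂'.1 with h | h | h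
  · exact absurd h₂'.2.1 (h₁'.2.2 c₂ h₂'.1 (h.ssubset_of_ne hne))
  · exact absurd h₁'.2.1 (h₂'.2.2 c₁ h₁'.1 (h.ssubset_of_ne hne.symm))
  · exact h

theorem exists_mem_children_superset {s t : Finset α} (ht : t ∈ P.clusters) (hts : t ⊂ s) :
    ∃ c ∈ P.children s, t ⊆ c := by
  obtain ⟨c, hc, hmax⟩ := exists_max_image
    (P.clusters.filter fun u => t ⊆ u ∧ u ⊂ s) card ⟨t, mem_filter.2 ⟨ht, subset_rfl, hts⟩⟩
  obtain ⟨hc, htc, hcs⟩ := mem_filter.1 hc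
  refine ⟨c, mem_filter.2 ⟨hc, hcs, fun u hu hcu hus => ?_⟩, htc⟩
  exact (hmax u (mem_filter.2 ⟨hu, htc.trans hcu.subset, hus⟩)).not_gt (card_lt_card hcu)

theorem exists_mem_children_mem {s : Finset α} (hs : s ∈ P.clusters) (hcard : 2 ≤ #s)
    {r : α} (hr : r ∈ s) : ∃ c ∈ P.children s, r ∈ c := by
  have hrs : {r} ⊂ s := ssubset_of_subset_of_ne (singleton_subset_iff.2 hr) fun h => by
    simp [← h] at hcard
  obtain ⟨c, hc, hrc⟩ :=
    exists_mem_children_superset (P.singleton_mem r (P.subset_R s hs hr)) hrs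
  exact ⟨c, hc, singleton_subset_iff.1 hrc⟩

variable {w : α → α → Finset α}

theorem IsWedge.mem_clusters_two_le_card (hw : P.IsWedge w) {p : α × α}
    (hp : p ∈ P.R.offDiag) : w p.1 p.2 ∈ P.clusters.filter fun s => 2 ≤ #s := by
  obtain ⟨h₁, h₂, hne⟩ := mem_offDiag.1 hp
  obtain ⟨hc, hm₁, hm₂, -⟩ := hw p.1 h₁ p.2 h₂
  exact mem_filter.2 ⟨hc, one_lt_card.2 ⟨p.1, hm₁, p.2, hm₂, hne⟩⟩

theorem IsWedge.filter_offDiag_eq (hw : P.IsWedge w) {s : Finset α} (hs : s ∈ P.clusters)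
    (hcard : 2 ≤ #s) :
    P.R.offDiag.filter (fun p => w p.1 p.2 = s) =
      s ×ˢ s \ (P.children s).biUnion fun c => c ×ˢ c := by
  ext ⟨r, r'⟩
  simp only [mem_filter, mem_offDiag, mem_sdiff, mem_biUnion, mem_product, not_exists,
    not_and]
  constructor
  · rintro ⟨⟨hr, hr', -⟩, rfl⟩
    obtain ⟨-, hm, hm', hmin⟩ := hw r hr r' hr'
    refine ⟨⟨hm, hm'⟩, fun c hc hrc hrc' => ?_⟩
    exact (ssubset_of_mem_children hc).not_subset
      (hmin c (mem_clusters_of_mem_children hc) hrc hrc')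
  · rintro ⟨⟨hr, hr'⟩, hnot⟩
    have hne : r ≠ r' := by
      rintro rfl
      obtain ⟨c, hc, hrc⟩ := exists_mem_children_mem hs hcard hr
      exact hnot c hc hrc hrc
    obtain ⟨hwc, hm, hm', hmin⟩ := hw r (P.subset_R s hs hr) r' (P.subset_R s hs hr')
    refine ⟨⟨P.subset_R s hs hr, P.subset_R s hs hr', hne⟩, ?_⟩
    refine (hmin s hs hr hr').eq_or_ssubset.resolve_right fun hss => ?_
    obtain ⟨c, hc, hwc⟩ := exists_mem_children_superset hwc hss
    exact hnot c hc (hwc hm) (hwc hm')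

end ClusterPicture

theorem stmt_3_general {α : Type*} [DecidableEq α] (P : ClusterPicture α)
    (w : α → α → Finset α)
    (hw : ∀ r ∈ P.R, ∀ r' ∈ P.R, w r r' ∈ P.clusters ∧ r ∈ w r r' ∧ r' ∈ w r r' ∧
      ∀ t ∈ P.clusters, r ∈ t → r' ∈ t → w r r' ⊆ t) :
    ∑ r ∈ P.R, ∑ r' ∈ P.R.erase r, P.depth (w r r') =
      ∑ s ∈ P.clusters.filter (fun s => 2 ≤ s.card),
        P.depth s * ((s.card : ℚ) ^ 2 - ∑ s' ∈ P.children s, (s'.card : ℚ) ^ 2) := by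
  have hw : P.IsWedge w := hw
  rw [sum_sum_erase_eq_sum_offDiag,
    ← sum_fiberwise_of_maps_to fun p hp => hw.mem_clusters_two_le_card hp]
  refine sum_congr rfl fun s hs => ?_
  obtain ⟨hs, hcard⟩ := mem_filter.1 hs
  rw [sum_congr rfl fun p hp => congrArg P.depth (mem_filter.1 hp).2, sum_const,
    nsmul_eq_mul, hw.filter_offDiag_eq hs hcard,
    card_product_self_sdiff_biUnion
      (fun c hc => (ClusterPicture.ssubset_of_mem_children hc).subset)
      (ClusterPicture.children_pairwiseDisjoint s), mul_comm]

/-- `2 ∑_{r ≠ r'} d_{r∧r'} = ∑_{s proper} d_s (|s|² − ∑_{s' < s} |s'|²)`, where the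
left-hand sum over unordered pairs, doubled, is written as a sum over ordered pairs, and
`w r r'` is the smallest cluster containing `r` and `r'`. -/
theorem stmt_3 {α : Type*} [DecidableEq α] (P : ClusterPicture α) (hR : 2 ≤ P.R.card)
    (w : α → α → Finset α)
    (hw : ∀ r ∈ P.R, ∀ r' ∈ P.R, w r r' ∈ P.clusters ∧ r ∈ w r r' ∧ r' ∈ w r r' ∧
      ∀ t ∈ P.clusters, r ∈ t → r' ∈ t → w r r' ⊆ t) :
    ∑ r ∈ P.R, ∑ r' ∈ P.R.erase r, P.depth (w r r') =
      ∑ s ∈ P.clusters.filter (fun s => 2 ≤ s.card),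
        P.depth s * ((s.card : ℚ) ^ 2 - ∑ s' ∈ P.children s, (s'.card : ℚ) ^ 2) :=
  stmt_3_general P w hw
end

section
/- Let Σ be a cluster picture on a set R of even size 2g+2 with a child s < R, and let Σ' be obtained by redistributing the depth between s and s^c = R∖s: increasing d_t by m for all proper clusters t ⊆ s, and decreasing d_t by m for all proper clusters t ⊆ s^c, keeping d_R fixed. Then v(Δ_{Σ',n}) = v(Δ_{Σ,n}) + m·(2|s| − |R|)·(|R| − 1), where v(Δ_{Σ,n}) = n(4g+2) + 2∑_{r≠r'∈R} d_{r∧r'}. -/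
open scoped Classical

/-- Redistributing depth by `m` between a child `s < R` and `s^c = R∖s` (so pair-depths
`D'` satisfy `D' = D + m` within `s`, `D' = D − m` within `s^c`, `D' = D` across)
changes `v(Δ_{Σ,n}) = n(4g+2) + 2∑_{unordered r≠r'} d_{r∧r'}` (written via ordered
pairs) by `m·(2|s| − |R|)·(|R| − 1)`. -/
theorem stmt_11 {α : Type*} [DecidableEq α] (P : ClusterPicture α) (g : ℕ)
    (hcard : P.R.card = 2 * g + 2)
    (w : α → α → Finset α)
    (hw : ∀ r ∈ P.R, ∀ r' ∈ P.R, w r r' ∈ P.clusters ∧ r ∈ w r r' ∧ r' ∈ w r r' ∧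
      ∀ u ∈ P.clusters, r ∈ u → r' ∈ u → w r r' ⊆ u)
    (s : Finset α) (hs : s ∈ P.clusters) (hsR : s ⊂ P.R)
    (hchild : ∀ t ∈ P.clusters, s ⊂ t → ¬ t ⊂ P.R)
    (m : ℚ) (n : ℤ) (D' : α → α → ℚ)
    (hin : ∀ r ∈ s, ∀ r' ∈ s, r ≠ r' → D' r r' = P.depth (w r r') + m)
    (hout : ∀ r ∈ P.R \ s, ∀ r' ∈ P.R \ s, r ≠ r' → D' r r' = P.depth (w r r') - m)
    (hcross : ∀ r ∈ P.R, ∀ r' ∈ P.R, r ≠ r' → ((r ∈ s) ↔ ¬ (r' ∈ s)) →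
      D' r r' = P.depth (w r r')) :
    (n : ℚ) * (4 * g + 2) + ∑ r ∈ P.R, ∑ r' ∈ P.R.erase r, D' r r' =
      ((n : ℚ) * (4 * g + 2) + ∑ r ∈ P.R, ∑ r' ∈ P.R.erase r, P.depth (w r r'))
        + m * (2 * (s.card : ℚ) - P.R.card) * ((P.R.card : ℚ) - 1) := by

  classical
  have hsub : s ⊆ P.R := hsR.subset
  -- pointwise description of D'
  have key : ∀ r ∈ P.R, ∀ r' ∈ P.R.erase r,
      D' r r' = P.depth (w r r') +
        (if r ∈ s then (if r' ∈ s then m else 0) else (if r' ∈ s then 0 else -m)) := by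
    intro r hr r' hr'
    have hr'R : r' ∈ P.R := Finset.mem_of_mem_erase hr'
    have hne : r ≠ r' := (Finset.ne_of_mem_erase hr').symm
    by_cases h1 : r ∈ s <;> by_cases h2 : r' ∈ s <;> simp only [h1, h2, if_true, if_false]
    · rw [hin r h1 r' h2 hne]
    · rw [hcross r hr r' hr'R hne (by simp [h1, h2]), add_zero]
    · rw [hcross r hr r' hr'R hne (by simp [h1, h2]), add_zero]
    · have := hout r (Finset.mem_sdiff.2 ⟨hr, h1⟩) r' (Finset.mem_sdiff.2 ⟨hr'R, h2⟩) hne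
      linarith
  have hsum : ∑ r ∈ P.R, ∑ r' ∈ P.R.erase r, D' r r'
      = ∑ r ∈ P.R, ∑ r' ∈ P.R.erase r, P.depth (w r r')
        + ∑ r ∈ P.R, ∑ r' ∈ P.R.erase r,
            (if r ∈ s then (if r' ∈ s then m else 0) else (if r' ∈ s then 0 else -m)) := by
    rw [← Finset.sum_add_distrib]
    refine Finset.sum_congr rfl fun r hr => ?_
    rw [← Finset.sum_add_distrib]
    exact Finset.sum_congr rfl fun r' hr' => key r hr r' hr'
  -- inner sums
  have hinner1 : ∀ r ∈ s, (∑ r' ∈ P.R.erase r, (if r' ∈ s then m else 0))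
      = ((s.card : ℚ) - 1) * m := by
    intro r hr
    rw [← Finset.sum_filter]
    have hfil : (P.R.erase r).filter (· ∈ s) = s.erase r := by
      ext x
      simp only [Finset.mem_filter, Finset.mem_erase]
      exact ⟨fun h => ⟨h.1.1, h.2⟩, fun h => ⟨⟨h.1, hsub h.2⟩, h.2⟩⟩
    rw [hfil, Finset.sum_const, Finset.card_erase_of_mem hr, nsmul_eq_mul]
    have h1 : 1 ≤ s.card := Finset.card_pos.2 ⟨r, hr⟩
    push_cast [h1]
    ring
  have hinner2 : ∀ r ∈ P.R \ s, (∑ r' ∈ P.R.erase r, (if r' ∈ s then 0 else -m))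
      = (((P.R \ s).card : ℚ) - 1) * (-m) := by
    intro r hr
    have : (∑ r' ∈ P.R.erase r, (if r' ∈ s then (0:ℚ) else -m))
        = ∑ r' ∈ P.R.erase r, (if r' ∉ s then -m else 0) := by
      refine Finset.sum_congr rfl fun r' _ => ?_
      by_cases h : r' ∈ s <;> simp [h]
    rw [this, ← Finset.sum_filter]
    have hfil : (P.R.erase r).filter (· ∉ s) = (P.R \ s).erase r := by
      ext x
      simp only [Finset.mem_filter, Finset.mem_erase, Finset.mem_sdiff]
      tauto
    rw [hfil, Finset.sum_const, Finset.card_erase_of_mem hr, nsmul_eq_mul]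
    have h1 : 1 ≤ (P.R \ s).card := Finset.card_pos.2 ⟨r, hr⟩
    push_cast [h1]
    ring
  have hsplit : ∑ r ∈ P.R, ∑ r' ∈ P.R.erase r,
      (if r ∈ s then (if r' ∈ s then m else 0) else (if r' ∈ s then 0 else -m))
      = (s.card : ℚ) * (((s.card : ℚ) - 1) * m)
        + ((P.R \ s).card : ℚ) * ((((P.R \ s).card : ℚ) - 1) * (-m)) := by
    rw [← Finset.sum_sdiff hsub]
    have e1 : ∑ r ∈ P.R \ s, ∑ r' ∈ P.R.erase r,
        (if r ∈ s then (if r' ∈ s then m else 0) else (if r' ∈ s then 0 else -m))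
        = ((P.R \ s).card : ℚ) * ((((P.R \ s).card : ℚ) - 1) * (-m)) := by
      rw [show (∑ r ∈ P.R \ s, ∑ r' ∈ P.R.erase r,
          (if r ∈ s then (if r' ∈ s then m else 0) else (if r' ∈ s then 0 else -m)))
          = ∑ _r ∈ P.R \ s, (((P.R \ s).card : ℚ) - 1) * (-m) from
        Finset.sum_congr rfl fun r hr => by
          simp only [if_neg (Finset.mem_sdiff.1 hr).2]; exact hinner2 r hr]
      rw [Finset.sum_const, nsmul_eq_mul]
    have e2 : ∑ r ∈ s, ∑ r' ∈ P.R.erase r,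
        (if r ∈ s then (if r' ∈ s then m else 0) else (if r' ∈ s then 0 else -m))
        = (s.card : ℚ) * (((s.card : ℚ) - 1) * m) := by
      rw [show (∑ r ∈ s, ∑ r' ∈ P.R.erase r,
          (if r ∈ s then (if r' ∈ s then m else 0) else (if r' ∈ s then 0 else -m)))
          = ∑ _r ∈ s, ((s.card : ℚ) - 1) * m from
        Finset.sum_congr rfl fun r hr => by simp only [if_pos hr]; exact hinner1 r hr]
      rw [Finset.sum_const, nsmul_eq_mul]
    rw [e1, e2]; ring
  have hc : ((P.R \ s).card : ℚ) = (P.R.card : ℚ) - (s.card : ℚ) := by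
    rw [Finset.card_sdiff_of_subset hsub]
    push_cast [Finset.card_le_card hsub]
    ring
  rw [hsum, hsplit, hc]
  ring
end

section
/- Let Σ be a cluster picture on R (all depths in ℤ, trivial Galois action) with d_R ≤ 0, and define: the pair (Σ, n) is integral if n ≥ 0 and d_R ≥ 0, or there is a cluster s with d_s ≤ 0 and n + (|s|−|t|)d_s + ∑_{r∉s} d_{r∧s} ≥ 0 for some t which is empty or a child of s that is a singleton or has d_t ≥ 0. Then the minimal integer n making (Σ, n) integral equals min_t (−∑_{r∉t} d_{r∧t}), where t ranges over all clusters with d_{P(t)} ≤ 0 that are either singletons or have d_t > 0. -/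
open scoped Classical

/-- For a cluster picture with integer depths (trivial Galois action) and `d_R ≤ 0`:
`(Σ, n)` is integral iff `n ≥ 0 ∧ d_R ≥ 0`, or some proper cluster `s` has `d_s ≤ 0` and
`n + (|s|−|t|)d_s + ∑_{r∉s} d_{r∧s} ≥ 0` for `t` empty or a child of `s` that is a
singleton or has `d_t ≥ 0`. The minimal integer `n` making `(Σ, n)` integral equals
`min_t (−∑_{r∉t} d_{r∧t})` over clusters `t` with `d_{P(t)} ≤ 0` that are singletons or
have `d_t > 0`. Here `W r t` is the smallest cluster containing `r` and `t`, and `Par`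
is the parent function. -/
theorem stmt_17 {α : Type*} [DecidableEq α] (P : ClusterPicture α)
    (hZdepth : ∀ s ∈ P.clusters, ∃ m : ℤ, P.depth s = (m : ℚ))
    (hdR : P.depth P.R ≤ 0) (hRcard : 2 ≤ P.R.card)
    (W : α → Finset α → Finset α)
    (hW : ∀ r ∈ P.R, ∀ s ∈ P.clusters, W r s ∈ P.clusters ∧ r ∈ W r s ∧ s ⊆ W r s ∧
      ∀ u ∈ P.clusters, r ∈ u → s ⊆ u → W r s ⊆ u)
    (Par : Finset α → Finset α)
    (hPar : ∀ s ∈ P.clusters, s ≠ P.R → Par s ∈ P.clusters ∧ s ⊂ Par s ∧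
      ∀ u ∈ P.clusters, s ⊂ u → Par s ⊆ u)
    (n : ℤ) :
    IsLeast {m : ℤ |
        ((0 : ℤ) ≤ m ∧ 0 ≤ P.depth P.R) ∨
        ∃ s ∈ P.clusters, 2 ≤ s.card ∧ P.depth s ≤ 0 ∧
          ((0 ≤ (m : ℚ) + (s.card : ℚ) * P.depth s + ∑ r ∈ P.R \ s, P.depth (W r s)) ∨
            ∃ t ∈ P.clusters, (t ⊂ s ∧ ∀ u ∈ P.clusters, t ⊂ u → ¬ u ⊂ s) ∧
              (t.card = 1 ∨ 0 ≤ P.depth t) ∧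
              0 ≤ (m : ℚ) + ((s.card : ℚ) - (t.card : ℚ)) * P.depth s +
                ∑ r ∈ P.R \ s, P.depth (W r s))} n
      ↔
    IsLeast {q : ℚ | ∃ t ∈ P.clusters,
        (t = P.R ∨ P.depth (Par t) ≤ 0) ∧ (t.card = 1 ∨ 0 < P.depth t) ∧
        q = - ∑ r ∈ P.R \ t, P.depth (W r t)} (n : ℚ) := by
  classical
  set F : Finset α → ℚ := fun t => ∑ r ∈ P.R \ t, P.depth (W r t) with hFdef
  -- `F` takes integer values on clusters
  have Fint : ∀ t ∈ P.clusters, ∃ k : ℤ, F t = (k : ℚ) := by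
    intro t ht
    have : ∀ r ∈ P.R \ t, ∃ k : ℤ, P.depth (W r t) = (k : ℚ) := by
      intro r hr
      rw [Finset.mem_sdiff] at hr
      exact hZdepth _ (hW r hr.1 t ht).1
    choose g hg using this
    refine ⟨∑ r ∈ (P.R \ t).attach, g r r.2, ?_⟩
    rw [hFdef]
    push_cast
    rw [← Finset.sum_attach (P.R \ t) (fun r => P.depth (W r t))]
    exact Finset.sum_congr rfl fun r _ => hg r r.2
  -- Key identity: for `t` a child of `s`, `F t = (|s| - |t|) * d s + F s`
  have key : ∀ s ∈ P.clusters, ∀ t ∈ P.clusters, t ⊂ s →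
      (∀ u ∈ P.clusters, t ⊂ u → ¬ u ⊂ s) →
      F t = ((s.card : ℚ) - (t.card : ℚ)) * P.depth s + F s := by
    intro s hs t ht hts hchild
    have htsub : t ⊆ s := hts.subset
    have hsR : s ⊆ P.R := P.subset_R s hs
    have hWs : ∀ r ∈ s \ t, W r t = s := by
      intro r hr
      rw [Finset.mem_sdiff] at hr
      have hrR : r ∈ P.R := hsR hr.1
      obtain ⟨hW1, hW2, hW3, hW4⟩ := hW r hrR t ht
      have hsub : W r t ⊆ s := hW4 s hs hr.1 htsub
      have hne : t ⊂ W r t := ⟨hW3, fun h => hr.2 (h hW2)⟩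
      by_contra hne2
      exact hchild (W r t) hW1 hne (hsub.ssubset_of_ne hne2)
    have hWrs : ∀ r ∈ P.R \ s, W r t = W r s := by
      intro r hr
      rw [Finset.mem_sdiff] at hr
      obtain ⟨hW1, hW2, hW3, hW4⟩ := hW r hr.1 t ht
      obtain ⟨hW1', hW2', hW3', hW4'⟩ := hW r hr.1 s hs
      have hsW : s ⊆ W r t := by
        rcases P.nested (W r t) hW1 s hs with h | h | h
        · exact absurd (h hW2) hr.2
        · exact h
        · obtain ⟨x, hx⟩ := P.nonempty_mem t ht
          exact absurd (htsub hx) (Finset.disjoint_left.mp h (hW3 hx))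
      exact subset_antisymm (hW4 (W r s) hW1' hW2' (htsub.trans hW3'))
        (hW4' (W r t) hW1 hW2 hsW)
    have hsplit : P.R \ t = (P.R \ s) ∪ (s \ t) := by
      ext x
      simp only [Finset.mem_sdiff, Finset.mem_union]
      constructor
      · rintro ⟨hx, hxt⟩
        by_cases hxs : x ∈ s
        · exact Or.inr ⟨hxs, hxt⟩
        · exact Or.inl ⟨hx, hxs⟩
      · rintro (⟨h1, h2⟩ | ⟨h1, h2⟩)
        · exact ⟨h1, fun h => h2 (htsub h)⟩
        · exact ⟨hsR h1, h2⟩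
    have hdisj : Disjoint (P.R \ s) (s \ t) := by
      rw [Finset.disjoint_left]
      intro x hx hx'
      rw [Finset.mem_sdiff] at hx hx'
      exact hx.2 hx'.1
    rw [hFdef]
    simp only
    rw [hsplit, Finset.sum_union hdisj]
    have h1 : ∑ r ∈ P.R \ s, P.depth (W r t) = ∑ r ∈ P.R \ s, P.depth (W r s) :=
      Finset.sum_congr rfl fun r hr => by rw [hWrs r hr]
    have h2 : ∑ r ∈ s \ t, P.depth (W r t) = ((s.card : ℚ) - (t.card : ℚ)) * P.depth s := by
      rw [Finset.sum_congr rfl fun r hr => by rw [hWs r hr], Finset.sum_const,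
        Finset.card_sdiff_of_subset htsub, nsmul_eq_mul]
      have := Finset.card_le_card htsub
      push_cast [Nat.cast_sub this]
      ring
    rw [h1, h2]
    ring
  -- every cluster of size ≥ 2 has a child
  have child_exists : ∀ s ∈ P.clusters, 2 ≤ s.card →
      ∃ t ∈ P.clusters, t ⊂ s ∧ ∀ u ∈ P.clusters, t ⊂ u → ¬ u ⊂ s := by
    intro s hs hcard
    obtain ⟨r, hr⟩ := P.nonempty_mem s hs
    have hrR : r ∈ P.R := P.subset_R s hs hr
    have hmem : ({r} : Finset α) ∈ P.clusters.filter (fun u => u ⊂ s) := by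
      rw [Finset.mem_filter]
      refine ⟨P.singleton_mem r hrR, ?_⟩
      refine (Finset.singleton_subset_iff.mpr hr).ssubset_of_ne ?_
      intro h
      rw [← h] at hcard
      simp at hcard
    obtain ⟨t, htmem, htmax⟩ := Finset.exists_max_image _ Finset.card ⟨_, hmem⟩
    rw [Finset.mem_filter] at htmem
    refine ⟨t, htmem.1, htmem.2, ?_⟩
    intro u hu htu hus
    have := htmax u (Finset.mem_filter.mpr ⟨hu, hus⟩)
    exact absurd this (not_le.mpr (Finset.card_lt_card htu))
  -- the parent of a child of s (with d_s ≤ 0) is s itself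
  have par_eq : ∀ s ∈ P.clusters, ∀ t ∈ P.clusters, t ⊂ s →
      (∀ u ∈ P.clusters, t ⊂ u → ¬ u ⊂ s) → Par t = s := by
    intro s hs t ht hts hchild
    have htR : t ≠ P.R := by
      intro h
      exact (hts.trans_subset (P.subset_R s hs)).ne h
    obtain ⟨hp1, hp2, hp3⟩ := hPar t ht htR
    have h1 : Par t ⊆ s := hp3 s hs hts
    by_contra hne
    exact hchild (Par t) hp1 hp2 (h1.ssubset_of_ne hne)
  -- valid clusters (the index set of the RHS) give LHS membership
  have toA : ∀ m : ℤ, ∀ t ∈ P.clusters, (t = P.R ∨ P.depth (Par t) ≤ 0) →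
      (t.card = 1 ∨ 0 < P.depth t) → 0 ≤ (m : ℚ) + F t →
      ((0 : ℤ) ≤ m ∧ 0 ≤ P.depth P.R) ∨
        ∃ s ∈ P.clusters, 2 ≤ s.card ∧ P.depth s ≤ 0 ∧
          ((0 ≤ (m : ℚ) + (s.card : ℚ) * P.depth s + F s) ∨
            ∃ t' ∈ P.clusters, (t' ⊂ s ∧ ∀ u ∈ P.clusters, t' ⊂ u → ¬ u ⊂ s) ∧
              (t'.card = 1 ∨ 0 ≤ P.depth t') ∧
              0 ≤ (m : ℚ) + ((s.card : ℚ) - (t'.card : ℚ)) * P.depth s + F s) := by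
    intro m t ht hpar hsing hge
    have htR : t ≠ P.R := by
      intro h
      subst h
      rcases hsing with h | h
      · omega
      · exact absurd hdR (not_le.mpr h)
    have hparle : P.depth (Par t) ≤ 0 := hpar.resolve_left htR
    obtain ⟨hp1, hp2, hp3⟩ := hPar t ht htR
    have hchild : ∀ u ∈ P.clusters, t ⊂ u → ¬ u ⊂ Par t := by
      intro u hu htu h
      exact h.not_subset (hp3 u hu htu)
    have hcard2 : 2 ≤ (Par t).card := by
      have h1 : 1 ≤ t.card := Finset.card_pos.mpr (P.nonempty_mem t ht)
      have h2 : t.card < (Par t).card := Finset.card_lt_card hp2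
      omega
    refine Or.inr ⟨Par t, hp1, hcard2, hparle, Or.inr ⟨t, ht, ⟨hp2, hchild⟩, ?_, ?_⟩⟩
    · rcases hsing with h | h
      · exact Or.inl h
      · exact Or.inr h.le
    · have := key (Par t) hp1 t ht hp2 hchild
      linarith
  -- descent lemma
  have descent : ∀ k : ℕ, ∀ s ∈ P.clusters, s.card ≤ k → 2 ≤ s.card → P.depth s ≤ 0 →
      ∀ q : ℚ, 0 ≤ q + (s.card : ℚ) * P.depth s + F s →
      ∃ t ∈ P.clusters, (t = P.R ∨ P.depth (Par t) ≤ 0) ∧ (t.card = 1 ∨ 0 < P.depth t) ∧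
        0 ≤ q + F t := by
    intro k
    induction k with
    | zero => intro s _ h1 h2 _ _ _; omega
    | succ k ih =>
      intro s hs hk hcard hd q hq
      obtain ⟨t, ht, hts, hchild⟩ := child_exists s hs hcard
      have htpos : 1 ≤ t.card := Finset.card_pos.mpr (P.nonempty_mem t ht)
      have htlt : t.card < s.card := Finset.card_lt_card hts
      have hkey := key s hs t ht hts hchild
      have hFt : 0 ≤ q + F t := by
        rw [hkey]
        have : (s.card : ℚ) * P.depth s ≤ ((s.card : ℚ) - (t.card : ℚ)) * P.depth s := by
          apply mul_le_mul_of_nonpos_right _ hd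
          have : (0 : ℚ) < (t.card : ℚ) := by exact_mod_cast htpos
          linarith
        linarith
      have hparle : P.depth (Par t) ≤ 0 := by
        rw [par_eq s hs t ht hts hchild]; exact hd
      by_cases hsing : t.card = 1
      · exact ⟨t, ht, Or.inr hparle, Or.inl hsing, hFt⟩
      · have ht2 : 2 ≤ t.card := by omega
        by_cases hdt : 0 < P.depth t
        · exact ⟨t, ht, Or.inr hparle, Or.inr hdt, hFt⟩
        · push_neg at hdt
          have hlt : P.depth s < P.depth t := P.depth_lt s hs t ht hts ht2
          apply ih t ht (by omega) ht2 hdt q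
          rw [hkey]
          have : (t.card : ℚ) * P.depth s ≤ (t.card : ℚ) * P.depth t := by
            apply mul_le_mul_of_nonneg_left hlt.le
            positivity
          have hsc : (t.card : ℚ) ≤ (s.card : ℚ) := by exact_mod_cast htlt.le
          nlinarith
  -- LHS membership gives a valid cluster with bound
  have fromA : ∀ m : ℤ,
      (((0 : ℤ) ≤ m ∧ 0 ≤ P.depth P.R) ∨
        ∃ s ∈ P.clusters, 2 ≤ s.card ∧ P.depth s ≤ 0 ∧
          ((0 ≤ (m : ℚ) + (s.card : ℚ) * P.depth s + F s) ∨
            ∃ t ∈ P.clusters, (t ⊂ s ∧ ∀ u ∈ P.clusters, t ⊂ u → ¬ u ⊂ s) ∧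
              (t.card = 1 ∨ 0 ≤ P.depth t) ∧
              0 ≤ (m : ℚ) + ((s.card : ℚ) - (t.card : ℚ)) * P.depth s + F s)) →
      ∃ t ∈ P.clusters, (t = P.R ∨ P.depth (Par t) ≤ 0) ∧ (t.card = 1 ∨ 0 < P.depth t) ∧
        0 ≤ (m : ℚ) + F t := by
    intro m hm
    have hFR : F P.R = 0 := by
      rw [hFdef]
      simp
    rcases hm with ⟨hm0, hdR0⟩ | ⟨s, hs, hcard, hd, hrest⟩
    · have hdReq : P.depth P.R = 0 := le_antisymm hdR hdR0
      apply descent P.R.card P.R P.top_mem le_rfl hRcard hdR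
      rw [hdReq, hFR]
      simp
      exact_mod_cast hm0
    · rcases hrest with hq | ⟨t, ht, ⟨hts, hchild⟩, hsing, hq⟩
      · exact descent s.card s hs le_rfl hcard hd _ hq
      · have hkey := key s hs t ht hts hchild
        have hFt : 0 ≤ (m : ℚ) + F t := by rw [hkey]; linarith
        rcases hsing with h1 | h2
        · refine ⟨t, ht, Or.inr ?_, Or.inl h1, hFt⟩
          rw [par_eq s hs t ht hts hchild]; exact hd
        · by_cases hdt : 0 < P.depth t
          · refine ⟨t, ht, Or.inr ?_, Or.inr hdt, hFt⟩
            rw [par_eq s hs t ht hts hchild]; exact hd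
          · push_neg at hdt
            have htpos : 1 ≤ t.card := Finset.card_pos.mpr (P.nonempty_mem t ht)
            by_cases ht1 : t.card = 1
            · refine ⟨t, ht, Or.inr ?_, Or.inl ht1, hFt⟩
              rw [par_eq s hs t ht hts hchild]; exact hd
            · have ht2 : 2 ≤ t.card := by omega
              have hdt0 : P.depth t = 0 := le_antisymm hdt h2
              apply descent t.card t ht le_rfl ht2 hdt (m : ℚ)
              rw [hdt0]
              simpa using hFt
  constructor
  · rintro ⟨hmem, hlb⟩
    obtain ⟨t', ht', hv1', hv2', hge'⟩ := fromA n hmem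
    obtain ⟨k', hk'⟩ := Fint t' ht'
    -- n ≤ -k' since -k' is in LHS set
    have hmemk : (-k') ∈ {m : ℤ |
        ((0 : ℤ) ≤ m ∧ 0 ≤ P.depth P.R) ∨
        ∃ s ∈ P.clusters, 2 ≤ s.card ∧ P.depth s ≤ 0 ∧
          ((0 ≤ (m : ℚ) + (s.card : ℚ) * P.depth s + ∑ r ∈ P.R \ s, P.depth (W r s)) ∨
            ∃ t ∈ P.clusters, (t ⊂ s ∧ ∀ u ∈ P.clusters, t ⊂ u → ¬ u ⊂ s) ∧
              (t.card = 1 ∨ 0 ≤ P.depth t) ∧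
              0 ≤ (m : ℚ) + ((s.card : ℚ) - (t.card : ℚ)) * P.depth s +
                ∑ r ∈ P.R \ s, P.depth (W r s))} := by
      exact toA (-k') t' ht' hv1' hv2' (by rw [hk']; push_cast; linarith)
    have hle1 : n ≤ -k' := hlb hmemk
    have heq : (n : ℚ) = -F t' := by
      rw [hk']
      have h1 : (n : ℚ) ≤ -(k' : ℚ) := by exact_mod_cast hle1
      rw [hk'] at hge'
      push_cast at hge' ⊢
      linarith
    constructor
    · exact ⟨t', ht', hv1', hv2', heq⟩
    · rintro q ⟨t, ht, hv1, hv2, rfl⟩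
      obtain ⟨k, hk⟩ := Fint t ht
      have hmemk2 := toA (-k) t ht hv1 hv2 (by rw [hk]; push_cast; linarith)
      have := hlb hmemk2
      show (n : ℚ) ≤ -F t
      rw [hk]
      push_cast
      have : (n : ℚ) ≤ -(k : ℚ) := by exact_mod_cast this
      linarith
  · rintro ⟨⟨t, ht, hv1, hv2, heq⟩, hlb⟩
    constructor
    · exact toA n t ht hv1 hv2 (by linarith [heq])
    · intro m hm
      obtain ⟨t', ht', hv1', hv2', hge'⟩ := fromA m hm
      have hmem' : -F t' ∈ {q : ℚ | ∃ t ∈ P.clusters,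
          (t = P.R ∨ P.depth (Par t) ≤ 0) ∧ (t.card = 1 ∨ 0 < P.depth t) ∧
          q = - ∑ r ∈ P.R \ t, P.depth (W r t)} := ⟨t', ht', hv1', hv2', rfl⟩
      have := hlb hmem'
      have : (n : ℚ) ≤ (m : ℚ) := by linarith
      exact_mod_cast this
end
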